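/- arXiv:1004.3383 — 2 statements merged into one kernel-verified Lean document; each statement's English description precedes it below -/
import Mathlib

section
/- For every function p in the class P and every positive integer k, there exists a complex number ν with |ν| = 1 such that Σ_{j=1}^{k} (1/j)|p_j − ν^j|^2 ≤ Σ_{j=1}^{k} 1/j, where p_j denotes the j-th Taylor coefficient of p at 0. -/
/-!
Let `G(ν) = ∑_{j=1}^k (1/j) Re(conj(c_j) ν^j)` and let `ν` maximise `G` on the unit circle. Since
`|c_j - ν^j|² = |c_j|² - 2 Re(conj(c_j) ν^j) + 1` there, it suffices to show
`∑ (1/j) |c_j|² ≤ 2 G(ν)`. For `0 < r < 1` the weight `w(θ) = Re p(r e^{iθ})` is nonnegative,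
has total mass `2π` (as `c_0 = 1`) and Fourier coefficients `∫ w(θ) e^{-ijθ} dθ = π c_j r^j`
for `j ≥ 1`. Hence `π ∑ (1/j) |c_j|² r^j = ∫ G(e^{-iθ}) w(θ) dθ ≤ 2π G(ν)`, and we let `r → 1`.
-/

open Complex Finset Filter Topology MeasureTheory
open scoped Real ComplexConjugate

lemma integral_exp_intCast_mul_mul_I (n : ℤ) :
    ∫ θ in (0 : ℝ)..2 * π, exp (n * θ * I) = if n = 0 then ((2 * π : ℝ) : ℂ) else 0 := by
  rcases eq_or_ne n 0 with rfl | hn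
  · simp
  have hnI : (n : ℂ) * I ≠ 0 := mul_ne_zero (Int.cast_ne_zero.2 hn) I_ne_zero
  simp_rw [mul_right_comm _ _ I]
  rw [integral_exp_mul_complex hnI, if_neg hn, ofReal_zero, mul_zero, exp_zero,
    ofReal_mul, ofReal_ofNat, show (n : ℂ) * I * (2 * π) = n * (2 * π * I) by ring,
    exp_int_mul_two_pi_mul_I, sub_self, zero_div]

lemma summable_norm_mul_pow_of_summable_mul_pow {𝕜 : Type*} [NormedField 𝕜] {c : ℕ → 𝕜}
    {z : 𝕜} (h : Summable fun m => c m * z ^ m) {r : ℝ} (hr0 : 0 ≤ r) (hr : r < ‖z‖) :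
    Summable fun m => ‖c m‖ * r ^ m := by
  have hz : 0 < ‖z‖ := hr0.trans_lt hr
  have hbdd : (fun m => ‖c m * z ^ m‖) =O[atTop] fun _ => (1 : ℝ) :=
    h.tendsto_atTop_zero.norm.isBigO_one ℝ
  refine summable_of_isBigO_nat (summable_geometric_of_lt_one (by positivity)
    ((div_lt_one hz).2 hr)) ?_
  have hnorm : (fun m => ‖c m‖ * r ^ m) = fun m => ‖c m * z ^ m‖ * (r / ‖z‖) ^ m := by
    ext m
    rw [norm_mul, norm_pow, div_pow, mul_assoc, mul_div_cancel₀ _ (pow_ne_zero m hz.ne')]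
  simpa [hnorm] using hbdd.mul (Asymptotics.isBigO_refl (fun m => (r / ‖z‖) ^ m) atTop)

section CircleSeries

variable {c : ℕ → ℂ} {r : ℝ} {f : ℝ → ℂ}

lemma continuous_of_hasSum_circle (hr : 0 ≤ r) (hs : Summable fun m => ‖c m‖ * r ^ m)
    (hf : ∀ θ : ℝ, HasSum (fun m => c m * (r * exp (θ * I)) ^ m) (f θ)) : Continuous f := by
  have : Continuous fun θ : ℝ => ∑' m, c m * (r * exp (θ * I)) ^ m :=
    continuous_tsum (fun m => by fun_prop) hs fun m θ => by simp [norm_exp, abs_of_nonneg hr]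
  exact this.congr fun θ => (hf θ).tsum_eq

lemma hasSum_integral_mul_exp (hr : 0 ≤ r) (hs : Summable fun m => ‖c m‖ * r ^ m)
    (hf : ∀ θ : ℝ, HasSum (fun m => c m * (r * exp (θ * I)) ^ m) (f θ)) (n : ℤ) :
    HasSum (fun m : ℕ => c m * r ^ m * ∫ θ in (0 : ℝ)..2 * π, exp (((m + n : ℤ) : ℂ) * θ * I))
      (∫ θ in (0 : ℝ)..2 * π, f θ * exp (n * θ * I)) := by
  have hterm : ∀ (m : ℕ) (θ : ℝ), c m * (r * exp (θ * I)) ^ m * exp (n * θ * I) =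
      c m * r ^ m * exp (((m + n : ℤ) : ℂ) * θ * I) := by
    intro m θ
    rw [mul_pow, ← exp_nat_mul, mul_assoc, mul_assoc, ← exp_add]
    push_cast
    ring_nf
  simp_rw [← intervalIntegral.integral_const_mul, ← hterm]
  refine intervalIntegral.hasSum_integral_of_dominated_convergence (fun m _ => ‖c m‖ * r ^ m)
    (fun m => (by fun_prop : Continuous _).aestronglyMeasurable)
    (fun m => .of_forall fun θ _ => ?_) (.of_forall fun _ _ => hs) intervalIntegrable_const
    (.of_forall fun θ _ => (hf θ).mul_right _)
  simp [norm_exp, abs_of_nonneg hr]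

lemma integral_mul_exp_neg_natCast_mul (hr : 0 ≤ r) (hs : Summable fun m => ‖c m‖ * r ^ m)
    (hf : ∀ θ : ℝ, HasSum (fun m => c m * (r * exp (θ * I)) ^ m) (f θ)) (n : ℕ) :
    ∫ θ in (0 : ℝ)..2 * π, f θ * exp (-(n * θ * I)) = 2 * π * (c n * r ^ n) := by
  have h := hasSum_integral_mul_exp hr hs hf (-n)
  have hcoeff : ∀ m : ℕ, (c m * r ^ m * ∫ θ in (0 : ℝ)..2 * π, exp (((m + -n : ℤ) : ℂ) * θ * I)) =
      if m = n then 2 * π * (c n * r ^ n) else 0 := by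
    intro m
    rw [integral_exp_intCast_mul_mul_I]
    by_cases hmn : m = n
    · subst hmn
      simp [mul_comm]
    · simp [hmn, show (m : ℤ) + -n ≠ 0 by omega]
  simp only [hcoeff, Int.cast_neg, Int.cast_natCast, neg_mul] at h
  exact h.unique (hasSum_ite_eq n _)

lemma integral_mul_exp_natCast_mul_eq_zero (hr : 0 ≤ r) (hs : Summable fun m => ‖c m‖ * r ^ m)
    (hf : ∀ θ : ℝ, HasSum (fun m => c m * (r * exp (θ * I)) ^ m) (f θ)) {n : ℕ} (hn : 0 < n) :
    ∫ θ in (0 : ℝ)..2 * π, f θ * exp (n * θ * I) = 0 := by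
  have h := hasSum_integral_mul_exp hr hs hf n
  simp only [integral_exp_intCast_mul_mul_I, show ∀ m : ℕ, (m : ℤ) + n ≠ 0 by omega, if_false,
    mul_zero, Int.cast_natCast] at h
  exact h.unique hasSum_zero

end CircleSeries

lemma integral_re_mul_exp_neg {f : ℝ → ℂ} (hf : Continuous f) (a α β : ℝ) :
    ∫ θ in α..β, ((f θ).re : ℂ) * exp (-(a * θ * I)) =
      ((∫ θ in α..β, f θ * exp (-(a * θ * I))) +
        conj (∫ θ in α..β, f θ * exp (a * θ * I))) / 2 := by
  have hconj : ∀ θ : ℝ, conj (exp (a * θ * I)) = exp (-(a * θ * I)) := fun θ => by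
    rw [← exp_conj, map_mul, map_mul, conj_ofReal, conj_ofReal, conj_I, mul_neg]
  have hsplit : ∀ θ : ℝ, ((f θ).re : ℂ) * exp (-(a * θ * I)) =
      f θ * exp (-(a * θ * I)) / 2 + conj (f θ * exp (a * θ * I)) / 2 := fun θ => by
    rw [map_mul, hconj, re_eq_add_conj]
    ring
  have hint : IntervalIntegrable (fun θ => f θ * exp (-(a * θ * I))) volume α β :=
    (by fun_prop : Continuous _).intervalIntegrable _ _
  have hint' : IntervalIntegrable (fun θ => conj (f θ * exp (a * θ * I))) volume α β :=
    (continuous_conj.comp (by fun_prop : Continuous fun θ : ℝ => f θ * exp (a * θ * I))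
      ).intervalIntegrable _ _
  simp_rw [hsplit]
  rw [intervalIntegral.integral_add (hint.div_const 2) (hint'.div_const 2),
    intervalIntegral.integral_div, intervalIntegral.integral_div,
    intervalIntegral.intervalIntegral_conj]
  ring

noncomputable def coeffPairing (c : ℕ → ℂ) (k : ℕ) (ν : ℂ) : ℝ :=
  ∑ j ∈ Icc 1 k, (1 / (j : ℝ)) * (conj (c j) * ν ^ j).re

lemma continuous_coeffPairing (c : ℕ → ℂ) (k : ℕ) : Continuous (coeffPairing c k) := by
  unfold coeffPairing
  fun_prop

lemma sum_inv_mul_norm_sub_pow_sq (c : ℕ → ℂ) (k : ℕ) {ν : ℂ} (hν : ‖ν‖ = 1) :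
    ∑ j ∈ Icc 1 k, (1 / (j : ℝ)) * ‖c j - ν ^ j‖ ^ 2 =
      ∑ j ∈ Icc 1 k, (1 / (j : ℝ)) * ‖c j‖ ^ 2 - 2 * coeffPairing c k ν +
        ∑ j ∈ Icc 1 k, (1 / (j : ℝ)) := by
  simp only [coeffPairing, mul_sum, ← sum_sub_distrib, ← sum_add_distrib]
  refine sum_congr rfl fun j _ => ?_
  rw [norm_sub_sq (𝕜 := ℂ), RCLike.inner_apply', norm_pow, hν, one_pow, one_pow]
  simp only [RCLike.re_to_complex]
  ring

lemma integral_coeffPairing_mul {w : ℝ → ℝ} (hw : Continuous w) (c : ℕ → ℂ) (k : ℕ)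
    (α β : ℝ) :
    ∫ θ in α..β, coeffPairing c k (exp (-(θ * I))) * w θ =
      ∑ j ∈ Icc 1 k,
        (1 / (j : ℝ)) * (conj (c j) * ∫ θ in α..β, (w θ : ℂ) * exp (-(j * θ * I))).re := by
  have hterm : ∀ θ : ℝ, coeffPairing c k (exp (-(θ * I))) * w θ = ∑ j ∈ Icc 1 k,
      (1 / (j : ℝ)) * (conj (c j) * ((w θ : ℂ) * exp (-(j * θ * I)))).re := fun θ => by
    simp only [coeffPairing, sum_mul, ← exp_nat_mul, mul_neg]
    refine sum_congr rfl fun j _ => ?_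
    rw [mul_left_comm _ (w θ : ℂ), re_ofReal_mul, mul_assoc (j : ℂ)]
    ring
  have hint : ∀ j : ℕ, IntervalIntegrable (fun θ : ℝ => (w θ : ℂ) * exp (-(j * θ * I)))
      volume α β := fun j => (by fun_prop : Continuous _).intervalIntegrable _ _
  simp_rw [hterm]
  rw [intervalIntegral.integral_finsetSum fun j _ =>
    (by fun_prop : Continuous _).intervalIntegrable _ _]
  refine sum_congr rfl fun j _ => ?_
  have hre := reCLM.intervalIntegral_comp_comm ((hint j).const_mul (conj (c j)))
  simp only [reCLM_apply] at hre
  rw [intervalIntegral.integral_const_mul, hre, intervalIntegral.integral_const_mul]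

lemma sum_inv_mul_norm_sq_mul_pow_le {c : ℕ → ℂ} {r : ℝ} {f : ℝ → ℂ} (hr : 0 ≤ r)
    (hs : Summable fun m => ‖c m‖ * r ^ m)
    (hf : ∀ θ : ℝ, HasSum (fun m => c m * (r * exp (θ * I)) ^ m) (f θ)) (hc0 : c 0 = 1)
    (hre : ∀ θ, 0 ≤ (f θ).re) {k : ℕ} {M : ℝ}
    (hM : ∀ ν : ℂ, ‖ν‖ = 1 → coeffPairing c k ν ≤ M) :
    ∑ j ∈ Icc 1 k, (1 / (j : ℝ)) * ‖c j‖ ^ 2 * r ^ j ≤ 2 * M := by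
  have hfc := continuous_of_hasSum_circle hr hs hf
  have hwc : Continuous fun θ => (f θ).re := continuous_re.comp hfc
  have hmass : ∫ θ in (0 : ℝ)..2 * π, (f θ).re = 2 * π := by
    have h := integral_mul_exp_neg_natCast_mul hr hs hf 0
    simp only [CharP.cast_eq_zero, zero_mul, neg_zero, exp_zero, mul_one, hc0, pow_zero] at h
    have hre := reCLM.intervalIntegral_comp_comm (hfc.intervalIntegrable (μ := volume) 0 (2 * π))
    simp only [reCLM_apply, h] at hre
    simpa using hre
  have hfour : ∀ j : ℕ, 0 < j →
      ∫ θ in (0 : ℝ)..2 * π, ((f θ).re : ℂ) * exp (-(j * θ * I)) = π * (c j * r ^ j) := by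
    intro j hj
    have h := integral_re_mul_exp_neg hfc j 0 (2 * π)
    simp only [ofReal_natCast] at h
    rw [h, integral_mul_exp_neg_natCast_mul hr hs hf,
      integral_mul_exp_natCast_mul_eq_zero hr hs hf hj, map_zero]
    ring
  have hpair : ∫ θ in (0 : ℝ)..2 * π, coeffPairing c k (exp (-(θ * I))) * (f θ).re =
      π * ∑ j ∈ Icc 1 k, (1 / (j : ℝ)) * ‖c j‖ ^ 2 * r ^ j := by
    rw [integral_coeffPairing_mul hwc, mul_sum]
    refine sum_congr rfl fun j hj => ?_
    rw [hfour j (mem_Icc.1 hj).1, mul_left_comm, ← mul_assoc (conj (c j)), conj_mul']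
    norm_cast
    ring
  have hbound : ∫ θ in (0 : ℝ)..2 * π, coeffPairing c k (exp (-(θ * I))) * (f θ).re ≤
      ∫ θ in (0 : ℝ)..2 * π, M * (f θ).re := by
    have hgc : Continuous fun θ : ℝ => coeffPairing c k (exp (-(θ * I))) :=
      (continuous_coeffPairing c k).comp (by fun_prop)
    refine intervalIntegral.integral_mono_on (by positivity)
      ((hgc.mul hwc).intervalIntegrable _ _) ((continuous_const.mul hwc).intervalIntegrable _ _)
      fun θ _ => ?_
    refine mul_le_mul_of_nonneg_right (hM _ ?_) (hre θ)
    rw [← neg_mul, ← ofReal_neg, norm_exp_ofReal_mul_I]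
  rw [hpair, intervalIntegral.integral_const_mul, hmass] at hbound
  nlinarith [Real.pi_pos]

lemma sum_inv_mul_norm_sq_le {p : ℂ → ℂ} {c : ℕ → ℂ} (hc0 : c 0 = 1)
    (hp : ∀ z ∈ Metric.ball (0 : ℂ) 1, HasSum (fun j => c j * z ^ j) (p z))
    (hre : ∀ z ∈ Metric.ball (0 : ℂ) 1, 0 < (p z).re) {k : ℕ} {M : ℝ}
    (hM : ∀ ν : ℂ, ‖ν‖ = 1 → coeffPairing c k ν ≤ M) :
    ∑ j ∈ Icc 1 k, (1 / (j : ℝ)) * ‖c j‖ ^ 2 ≤ 2 * M := by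
  have hball : ∀ {r : ℝ}, 0 ≤ r → r < 1 → (r : ℂ) ∈ Metric.ball (0 : ℂ) 1 := fun hr0 hr1 => by
    rwa [mem_ball_zero_iff, norm_real, Real.norm_of_nonneg hr0]
  have hcircle : ∀ {r : ℝ}, 0 ≤ r → r < 1 → ∀ θ : ℝ,
      (r : ℂ) * exp (θ * I) ∈ Metric.ball (0 : ℂ) 1 := fun hr0 hr1 θ => by
    simpa [norm_exp_ofReal_mul_I] using hball hr0 hr1
  have hbound : ∀ r ∈ Set.Ioo (0 : ℝ) 1,
      ∑ j ∈ Icc 1 k, (1 / (j : ℝ)) * ‖c j‖ ^ 2 * r ^ j ≤ 2 * M := by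
    rintro r ⟨hr0, hr1⟩
    obtain ⟨s, hrs, hs1⟩ := exists_between hr1
    have hs0 : 0 ≤ s := hr0.le.trans hrs.le
    have hsum := summable_norm_mul_pow_of_summable_mul_pow (hp _ (hball hs0 hs1)).summable
      hr0.le (by rwa [norm_real, Real.norm_of_nonneg hs0])
    exact sum_inv_mul_norm_sq_mul_pow_le hr0.le hsum (fun θ => hp _ (hcircle hr0.le hr1 θ)) hc0
      (fun θ => (hre _ (hcircle hr0.le hr1 θ)).le) hM
  have hlim : Tendsto (fun r : ℝ => ∑ j ∈ Icc 1 k, (1 / (j : ℝ)) * ‖c j‖ ^ 2 * r ^ j) (𝓝[<] 1)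
      (𝓝 (∑ j ∈ Icc 1 k, (1 / (j : ℝ)) * ‖c j‖ ^ 2)) := by
    have hcont : Continuous fun r : ℝ => ∑ j ∈ Icc 1 k, (1 / (j : ℝ)) * ‖c j‖ ^ 2 * r ^ j := by
      fun_prop
    simpa using (hcont.tendsto 1).mono_left nhdsWithin_le_nhds
  exact le_of_tendsto hlim (eventually_of_mem (Ioo_mem_nhdsLT zero_lt_one) hbound)

theorem caratheodory_successive_coeff_bound_general
    (p : ℂ → ℂ) (c : ℕ → ℂ) (hc0 : c 0 = 1)
    (hp : ∀ z ∈ Metric.ball (0 : ℂ) 1, HasSum (fun j => c j * z ^ j) (p z))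
    (hre : ∀ z ∈ Metric.ball (0 : ℂ) 1, 0 < (p z).re)
    (k : ℕ) :
    ∃ ν : ℂ, ‖ν‖ = 1 ∧
      ∑ j ∈ Finset.Icc 1 k, (1 / (j : ℝ)) * ‖c j - ν ^ j‖ ^ 2 ≤
        ∑ j ∈ Finset.Icc 1 k, (1 / (j : ℝ)) := by
  obtain ⟨ν, hν, hmax⟩ := (isCompact_sphere (0 : ℂ) 1).exists_isMaxOn
    (NormedSpace.sphere_nonempty.2 zero_le_one) (continuous_coeffPairing c k).continuousOn
  rw [mem_sphere_zero_iff_norm] at hν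
  have hsq := sum_inv_mul_norm_sq_le hc0 hp hre fun μ hμ =>
    hmax (mem_sphere_zero_iff_norm.2 hμ)
  refine ⟨ν, hν, ?_⟩
  rw [sum_inv_mul_norm_sub_pow_sq c k hν]
  linarith

/-- Lemma 2.2 (Leung): For every p in the class P (analytic in the unit disk,
p(0) = 1, Re p > 0) and every positive integer k, there exists ν with |ν| = 1 such that
Σ_{j=1}^k (1/j)|p_j − ν^j|² ≤ Σ_{j=1}^k 1/j. -/
theorem caratheodory_successive_coeff_bound
    (p : ℂ → ℂ) (c : ℕ → ℂ) (hc0 : c 0 = 1)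
    (hp : ∀ z ∈ Metric.ball (0 : ℂ) 1, HasSum (fun j => c j * z ^ j) (p z))
    (hre : ∀ z ∈ Metric.ball (0 : ℂ) 1, 0 < (p z).re)
    (k : ℕ) (hk : 1 ≤ k) :
    ∃ ν : ℂ, ‖ν‖ = 1 ∧
      ∑ j ∈ Finset.Icc 1 k, (1 / (j : ℝ)) * ‖c j - ν ^ j‖ ^ 2 ≤
        ∑ j ∈ Finset.Icc 1 k, (1 / (j : ℝ)) :=
  caratheodory_successive_coeff_bound_general p c hc0 hp hre k
end

section
/- Let n ∈ ℕ and let f ∈ S_n with Taylor expansion f(z) = z + Σ_{k≥2} a_k z^k. Then for every integer k ≥ 2, |a_k| ≤ k^{1−n}. -/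
/-!
Put `b k = k ^ n * a k`, so that `g = Dⁿ f = ∑ b k z ^ k` and `z g' = Dⁿ⁺¹ f`; the hypothesis says
that `g` is starlike. Then `p = z g' / g` extends holomorphically to the disc with `p 0 = 1` and
`Re p ≥ 0`, and Carathéodory's lemma bounds its coefficients by `|c m| ≤ 2`: on the circle of
radius `r` one has `2π c m r ^ m = ∫ 2 Re p(r e^{iθ}) e^{-imθ} dθ`, whose modulus is at most
`∫ 2 Re p = 4π`. Comparing coefficients in `z g' = g p` gives `(k - 1) b k = ∑_{i<k} b i c (k - i)`,
and induction yields `|b k| ≤ k`, i.e. `|a k| ≤ k ^ (1 - n)`.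
-/

open Complex Metric Filter Topology FormalMultilinearSeries
open scoped Real ComplexConjugate Nat

def HasPowerSeriesOnUnitDisc (F : ℂ → ℂ) (c : ℕ → ℂ) : Prop :=
  ∀ z ∈ ball (0 : ℂ) 1, HasSum (fun k => c k * z ^ k) (F z)

theorem circleMap_zero_mem_ball_one {r : ℝ} (hr0 : 0 ≤ r) (hr1 : r < 1) (θ : ℝ) :
    circleMap 0 r θ ∈ ball (0 : ℂ) 1 := by
  simpa [abs_of_nonneg hr0] using hr1

theorem integral_exp_int_mul_I (j : ℤ) :
    ∫ θ in (0 : ℝ)..2 * π, exp (j * θ * I) = if j = 0 then (2 * π : ℂ) else 0 := by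
  split_ifs with hj
  · simp [hj]
  have hjI : (j : ℂ) * I ≠ 0 := by simp [hj]
  simp_rw [mul_right_comm _ _ I]
  rw [integral_exp_mul_complex hjI, ofReal_zero, mul_zero, Complex.exp_zero,
    show (j : ℂ) * I * ((2 * π : ℝ) : ℂ) = j * (2 * π * I) by push_cast; ring,
    exp_int_mul_two_pi_mul_I, sub_self, zero_div]

theorem DifferentiableOn.hasPowerSeriesOnUnitDisc {f : ℂ → ℂ}
    (hf : DifferentiableOn ℂ f (ball 0 1)) :
    HasPowerSeriesOnUnitDisc f fun n => iteratedDeriv n f 0 / n ! := by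
  intro z hz
  refine (Complex.hasSum_taylorSeries_on_ball hf hz).congr_fun fun n => ?_
  simp only [sub_zero, smul_eq_mul]
  ring

namespace HasPowerSeriesOnUnitDisc

variable {F G p : ℂ → ℂ} {c d : ℕ → ℂ}

theorem hasFPowerSeriesOnBall (hF : HasPowerSeriesOnUnitDisc F c) :
    HasFPowerSeriesOnBall F (ofScalars ℂ c) 0 1 where
  r_le := ENNReal.le_of_forall_nnreal_lt fun r hr => by
    refine (ofScalars ℂ c).le_radius_of_tendsto (l := 0) ?_
    have hr' : (r : ℂ) ∈ ball (0 : ℂ) 1 := by simpa using hr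
    simpa [ofScalars_norm] using (hF _ hr').summable.tendsto_atTop_zero.norm
  r_pos := one_pos
  hasSum {y} hy := by
    rw [← ENNReal.ofReal_one, eball_ofReal] at hy
    simpa [ofScalars_apply_eq, mul_comm] using hF y hy

theorem differentiableOn (hF : HasPowerSeriesOnUnitDisc F c) :
    DifferentiableOn ℂ F (ball 0 1) := by
  simpa [← ENNReal.ofReal_one, eball_ofReal] using hF.hasFPowerSeriesOnBall.differentiableOn

theorem continuous_comp_circleMap (hF : HasPowerSeriesOnUnitDisc F c) {r : ℝ} (hr0 : 0 ≤ r)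
    (hr1 : r < 1) : Continuous fun θ => F (circleMap 0 r θ) :=
  hF.differentiableOn.continuousOn.comp_continuous (continuous_circleMap 0 r)
    (circleMap_zero_mem_ball_one hr0 hr1)

theorem summable_norm_mul_pow (hF : HasPowerSeriesOnUnitDisc F c) {r : ℝ} (hr0 : 0 ≤ r)
    (hr1 : r < 1) : Summable fun k => ‖c k‖ * r ^ k := by
  lift r to NNReal using hr0
  have hr : (r : ENNReal) < (ofScalars ℂ c).radius :=
    hF.hasFPowerSeriesOnBall.r_le.trans_lt' (by exact_mod_cast hr1)
  simpa only [ofScalars_norm] using (ofScalars ℂ c).summable_norm_mul_pow hr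

theorem apply_zero (hF : HasPowerSeriesOnUnitDisc F c) : F 0 = c 0 :=
  (hF 0 (mem_ball_self one_pos)).unique <| by
    simpa using hasSum_single (f := fun k => c k * (0 : ℂ) ^ k) 0 fun k hk => by simp [hk]

theorem unique (hF : HasPowerSeriesOnUnitDisc F c) (hd : HasPowerSeriesOnUnitDisc F d) :
    c = d :=
  ofScalars_series_injective ℂ ℂ
    (hF.hasFPowerSeriesOnBall.hasFPowerSeriesAt.eq_formalMultilinearSeries
      hd.hasFPowerSeriesOnBall.hasFPowerSeriesAt)

theorem mul (hF : HasPowerSeriesOnUnitDisc F c) (hG : HasPowerSeriesOnUnitDisc G d) :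
    HasPowerSeriesOnUnitDisc (F * G) fun n => ∑ k ∈ Finset.range (n + 1), c k * d (n - k) := by
  intro z hz
  have hz1 : ‖z‖ < 1 := by simpa using hz
  have hsum := hasSum_sum_range_mul_of_summable_norm
    (f := fun k => c k * z ^ k) (g := fun k => d k * z ^ k)
    (by simpa using hF.summable_norm_mul_pow (norm_nonneg z) hz1)
    (by simpa using hG.summable_norm_mul_pow (norm_nonneg z) hz1)
  rw [(hF z hz).tsum_eq, (hG z hz).tsum_eq] at hsum
  refine hsum.congr_fun fun n => ?_
  rw [Finset.sum_mul]
  refine Finset.sum_congr rfl fun k hk => ?_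
  rw [← pow_mul_pow_sub z (Finset.mem_range_succ_iff.1 hk)]
  ring

theorem dslope (hF : HasPowerSeriesOnUnitDisc F c) (hc0 : c 0 = 0) :
    HasPowerSeriesOnUnitDisc (dslope F 0) fun k => c (k + 1) := by
  intro z hz
  rcases eq_or_ne z 0 with rfl | hz0
  · rw [dslope_same, hF.hasFPowerSeriesOnBall.hasFPowerSeriesAt.deriv]
    simpa using hasSum_single (f := fun k => c (k + 1) * (0 : ℂ) ^ k) 0 fun k hk => by simp [hk]
  · rw [dslope_of_ne _ hz0, slope_def_field, hF.apply_zero, hc0, sub_zero, sub_zero]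
    have h := (hasSum_nat_add_iff' 1).2 (hF z hz)
    simp only [Finset.range_one, Finset.sum_singleton, hc0, zero_mul, sub_zero] at h
    refine (h.div_const z).congr_fun fun k => ?_
    field_simp
    ring

theorem hasSum_integral_comp_circleMap_mul_exp (hF : HasPowerSeriesOnUnitDisc F c) {r : ℝ}
    (hr0 : 0 ≤ r) (hr1 : r < 1) (m : ℤ) :
    HasSum (fun k : ℕ => c k * r ^ k * if (k : ℤ) + m = 0 then (2 * π : ℂ) else 0)
      (∫ θ in (0 : ℝ)..2 * π, F (circleMap 0 r θ) * exp (m * θ * I)) := by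
  have hterm : ∀ (k : ℕ) (θ : ℝ), c k * circleMap 0 r θ ^ k * exp (m * θ * I) =
      c k * r ^ k * exp (((k + m : ℤ) : ℂ) * θ * I) := by
    intro k θ
    rw [circleMap_zero, mul_pow, ← Complex.exp_nat_mul, mul_assoc (c k), mul_assoc, ← exp_add]
    push_cast
    ring_nf
  have hnorm : ∀ (k : ℕ) (θ : ℝ), ‖c k * r ^ k * exp (((k + m : ℤ) : ℂ) * θ * I)‖ =
      ‖c k‖ * r ^ k := by
    intro k θ
    simp [norm_exp, abs_of_nonneg hr0]
  have h := intervalIntegral.hasSum_integral_of_dominated_convergence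
    (F := fun (k : ℕ) (θ : ℝ) => c k * r ^ k * exp (((k + m : ℤ) : ℂ) * θ * I))
    (f := fun θ => F (circleMap 0 r θ) * exp (m * θ * I)) (μ := MeasureTheory.volume)
    (a := 0) (b := 2 * π)
    (fun k _ => ‖c k‖ * r ^ k)
    (fun k => (continuous_const.mul (by fun_prop)).aestronglyMeasurable)
    (fun k => Eventually.of_forall fun θ _ => (hnorm k θ).le)
    (Eventually.of_forall fun _ _ => hF.summable_norm_mul_pow hr0 hr1)
    intervalIntegrable_const
    (Eventually.of_forall fun θ _ => by
      simpa only [hterm] using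
        (hF _ (circleMap_zero_mem_ball_one hr0 hr1 θ)).mul_right (exp (m * θ * I)))
  refine h.congr_fun fun k => ?_
  rw [intervalIntegral.integral_const_mul, integral_exp_int_mul_I]

theorem integral_comp_circleMap_mul_exp_neg (hF : HasPowerSeriesOnUnitDisc F c) {r : ℝ}
    (hr0 : 0 ≤ r) (hr1 : r < 1) (m : ℕ) :
    ∫ θ in (0 : ℝ)..2 * π, F (circleMap 0 r θ) * exp (-m * θ * I) =
      2 * π * c m * r ^ m := by
  have h := hF.hasSum_integral_comp_circleMap_mul_exp hr0 hr1 (-m)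
  push_cast at h
  refine h.unique ?_
  convert hasSum_ite_eq m (2 * π * c m * r ^ m) using 2 with k
  rcases eq_or_ne k m with rfl | hkm
  · simp only [add_neg_cancel, if_true]
    ring
  · rw [if_neg (by omega), if_neg hkm, mul_zero]

theorem integral_comp_circleMap_mul_exp_of_ne_zero (hF : HasPowerSeriesOnUnitDisc F c) {r : ℝ}
    (hr0 : 0 ≤ r) (hr1 : r < 1) {m : ℕ} (hm : m ≠ 0) :
    ∫ θ in (0 : ℝ)..2 * π, F (circleMap 0 r θ) * exp (m * θ * I) = 0 := by
  have h := hF.hasSum_integral_comp_circleMap_mul_exp hr0 hr1 m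
  push_cast at h
  refine h.unique ?_
  convert hasSum_zero with k
  rw [if_neg (by omega), mul_zero]

theorem integral_re_comp_circleMap (hF : HasPowerSeriesOnUnitDisc F c) {r : ℝ} (hr0 : 0 ≤ r)
    (hr1 : r < 1) : ∫ θ in (0 : ℝ)..2 * π, (F (circleMap 0 r θ)).re = 2 * π * (c 0).re := by
  have hmean : ∫ θ in (0 : ℝ)..2 * π, F (circleMap 0 r θ) = 2 * π * c 0 := by
    simpa using hF.integral_comp_circleMap_mul_exp_neg hr0 hr1 0
  have hint := (hF.continuous_comp_circleMap hr0 hr1).intervalIntegrable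
    (μ := MeasureTheory.volume) 0 (2 * π)
  rw [show (fun θ => (F (circleMap 0 r θ)).re) = fun θ => reCLM (F (circleMap 0 r θ)) from rfl,
    reCLM.intervalIntegral_comp_comm hint, reCLM_apply, hmean]
  simp

theorem integral_two_mul_re_comp_circleMap_mul_exp_neg (hF : HasPowerSeriesOnUnitDisc F c)
    {r : ℝ} (hr0 : 0 ≤ r) (hr1 : r < 1) {m : ℕ} (hm : m ≠ 0) :
    ∫ θ in (0 : ℝ)..2 * π, ((2 * (F (circleMap 0 r θ)).re : ℝ) : ℂ) * exp (-m * θ * I) =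
      2 * π * c m * r ^ m := by
  set q : ℝ → ℂ := fun θ => F (circleMap 0 r θ)
  have hcoeff : ∫ θ in (0 : ℝ)..2 * π, q θ * exp (-m * θ * I) = 2 * π * c m * r ^ m :=
    hF.integral_comp_circleMap_mul_exp_neg hr0 hr1 m
  have hortho : ∫ θ in (0 : ℝ)..2 * π, q θ * exp (m * θ * I) = 0 :=
    hF.integral_comp_circleMap_mul_exp_of_ne_zero hr0 hr1 hm
  have hqe : ∀ w : ℂ, Continuous fun θ : ℝ => q θ * exp (w * θ * I) :=
    fun w => (hF.continuous_comp_circleMap hr0 hr1).mul (by fun_prop)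
  have hqe' : Continuous fun θ : ℝ => conj (q θ * exp (m * θ * I)) :=
    continuous_conj.comp (hqe m)
  have h2π : (0 : ℝ) ≤ 2 * π := by positivity
  calc ∫ θ in (0 : ℝ)..2 * π, ((2 * (q θ).re : ℝ) : ℂ) * exp (-m * θ * I)
    _ = ∫ θ in (0 : ℝ)..2 * π, q θ * exp (-m * θ * I) + conj (q θ * exp (m * θ * I)) := by
      refine intervalIntegral.integral_congr fun θ _ => ?_
      rw [← add_conj, map_mul, ← exp_conj]
      simp only [map_mul, conj_ofReal, conj_I, map_natCast]
      ring_nf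
    _ = 2 * π * c m * r ^ m := by
      -- `conj q` is orthogonal to `exp (-m θ I)` since `q` has no negative frequencies
      rw [intervalIntegral.integral_add ((hqe _).intervalIntegrable _ _)
        (hqe'.intervalIntegrable _ _), hcoeff, intervalIntegral.integral_of_le h2π,
        integral_conj, ← intervalIntegral.integral_of_le h2π, hortho, map_zero, add_zero]

theorem norm_coeff_mul_pow_le_of_re_nonneg (hp : HasPowerSeriesOnUnitDisc p c)
    (hre : ∀ z ∈ ball (0 : ℂ) 1, 0 ≤ (p z).re) {r : ℝ} (hr0 : 0 ≤ r) (hr1 : r < 1)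
    {m : ℕ} (hm : m ≠ 0) : ‖c m‖ * r ^ m ≤ 2 * (c 0).re := by
  have h2π : (0 : ℝ) ≤ 2 * π := by positivity
  have hle : 2 * π * (‖c m‖ * r ^ m) ≤ 2 * π * (2 * (c 0).re) := calc
    2 * π * (‖c m‖ * r ^ m) = ‖2 * π * c m * r ^ m‖ := by
      simp only [Complex.norm_mul, norm_ofNat, norm_real, Real.norm_eq_abs,
        abs_of_pos Real.pi_pos, norm_pow, abs_of_nonneg hr0]
      ring
    _ ≤ ∫ θ in (0 : ℝ)..2 * π,
          ‖((2 * (p (circleMap 0 r θ)).re : ℝ) : ℂ) * exp (-m * θ * I)‖ := by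
      rw [← hp.integral_two_mul_re_comp_circleMap_mul_exp_neg hr0 hr1 hm]
      exact intervalIntegral.norm_integral_le_integral_norm h2π
    _ = ∫ θ in (0 : ℝ)..2 * π, 2 * (p (circleMap 0 r θ)).re := by
      refine intervalIntegral.integral_congr fun θ _ => ?_
      simp [norm_exp, abs_of_nonneg (hre _ (circleMap_zero_mem_ball_one hr0 hr1 θ))]
    _ = 2 * π * (2 * (c 0).re) := by
      rw [intervalIntegral.integral_const_mul, hp.integral_re_comp_circleMap hr0 hr1]
      ring
  exact le_of_mul_le_mul_left hle (by positivity)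

theorem norm_coeff_le_of_re_nonneg (hp : HasPowerSeriesOnUnitDisc p c)
    (hre : ∀ z ∈ ball (0 : ℂ) 1, 0 ≤ (p z).re) {m : ℕ} (hm : m ≠ 0) :
    ‖c m‖ ≤ 2 * (c 0).re := by
  have h : Tendsto (fun r : ℝ => ‖c m‖ * r ^ m) (𝓝[<] 1) (𝓝 ‖c m‖) := by
    have hcont : Continuous fun r : ℝ => ‖c m‖ * r ^ m := by fun_prop
    simpa using (hcont.tendsto 1).mono_left nhdsWithin_le_nhds
  refine le_of_tendsto h ?_
  filter_upwards [Ioo_mem_nhdsLT zero_lt_one] with r hr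
  exact hp.norm_coeff_mul_pow_le_of_re_nonneg hre hr.1.le hr.2 hm

end HasPowerSeriesOnUnitDisc

theorem norm_le_of_natCast_mul_eq_sum {b c : ℕ → ℂ} (hb1 : b 1 = 1) (hc0 : c 0 = 1)
    (hc : ∀ m, m ≠ 0 → ‖c m‖ ≤ 2)
    (hrec : ∀ k : ℕ, k * b k = ∑ i ∈ Finset.range (k + 1), b i * c (k - i)) (k : ℕ) :
    ‖b k‖ ≤ k := by
  induction k using Nat.strong_induction_on with | _ k ih => ?_
  rcases Nat.lt_or_ge k 2 with hk | hk
  · interval_cases k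
    · simpa [hc0, eq_comm] using hrec 0
    · simp [hb1]
  have hk1 : (1 : ℝ) < k := by exact_mod_cast hk
  have hrec' : ∑ i ∈ Finset.range k, b i * c (k - i) = ((k : ℝ) - 1 : ℝ) * b k := by
    have h := hrec k
    rw [Finset.sum_range_succ, Nat.sub_self, hc0, mul_one] at h
    push_cast
    linear_combination -h
  have hsum : ((k : ℝ) - 1) * ‖b k‖ ≤ ∑ i ∈ Finset.range k, 2 * (i : ℝ) := calc
    ((k : ℝ) - 1) * ‖b k‖ = ‖∑ i ∈ Finset.range k, b i * c (k - i)‖ := by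
      rw [hrec', norm_mul, Complex.norm_real, Real.norm_of_nonneg (by linarith)]
    _ ≤ ∑ i ∈ Finset.range k, 2 * (i : ℝ) := by
      refine (norm_sum_le _ _).trans (Finset.sum_le_sum fun i hi => ?_)
      have hi := Finset.mem_range.1 hi
      rw [norm_mul, mul_comm]
      exact mul_le_mul (hc _ (by omega)) (ih i hi) (norm_nonneg _) zero_le_two
  have hgauss : ∑ i ∈ Finset.range k, 2 * (i : ℝ) = k * ((k : ℝ) - 1) := by
    have h := congrArg (Nat.cast (R := ℝ)) (Finset.sum_range_id_mul_two k)
    push_cast [Nat.cast_sub (by omega : 1 ≤ k)] at h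
    rw [← Finset.mul_sum]
    linarith
  exact le_of_mul_le_mul_left (hsum.trans_eq (hgauss.trans (mul_comm _ _))) (by linarith)

section Starlike

variable {b : ℕ → ℂ} {g g₁ : ℂ → ℂ}

theorem exists_re_nonneg_of_starlike (hg : HasPowerSeriesOnUnitDisc g b)
    (hg₁ : HasPowerSeriesOnUnitDisc g₁ fun k => k * b k) (hb0 : b 0 = 0) (hb1 : b 1 = 1)
    (hne : ∀ z ∈ ball (0 : ℂ) 1, z ≠ 0 → g z ≠ 0)
    (hre : ∀ z ∈ ball (0 : ℂ) 1, z ≠ 0 → 0 < (g₁ z / g z).re) :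
    ∃ (p : ℂ → ℂ) (c : ℕ → ℂ), HasPowerSeriesOnUnitDisc p c ∧ c 0 = 1 ∧
      (∀ z ∈ ball (0 : ℂ) 1, 0 ≤ (p z).re) ∧
      ∀ z ∈ ball (0 : ℂ) 1, g₁ z = g z * p z := by
  have hG := hg.dslope hb0
  have hH := hg₁.dslope (by simp [hb0])
  have hG0 : dslope g 0 0 = 1 := by simpa [hb1] using hG.apply_zero
  have hH0 : dslope g₁ 0 0 = 1 := by simpa [hb1] using hH.apply_zero
  have hgG : ∀ z, g z = z * dslope g 0 z := fun z => by
    simpa [hg.apply_zero, hb0] using (sub_smul_dslope g 0 z).symm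
  have hgH : ∀ z, g₁ z = z * dslope g₁ 0 z := fun z => by
    simpa [hg₁.apply_zero, hb0] using (sub_smul_dslope g₁ 0 z).symm
  have hGne : ∀ z ∈ ball (0 : ℂ) 1, dslope g 0 z ≠ 0 := by
    intro z hz
    rcases eq_or_ne z 0 with rfl | hz0
    · rw [hG0]; exact one_ne_zero
    · exact right_ne_zero_of_mul (hgG z ▸ hne z hz hz0)
  set p : ℂ → ℂ := fun z => dslope g₁ 0 z / dslope g 0 z
  have hp0 : p 0 = 1 := by simp only [p, hG0, hH0, div_one]
  have hpq : ∀ z, z ≠ 0 → p z = g₁ z / g z := fun z hz0 => by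
    simp only [p, hgG z, hgH z, mul_div_mul_left _ _ hz0]
  have hp := (hH.differentiableOn.div hG.differentiableOn hGne).hasPowerSeriesOnUnitDisc
  refine ⟨p, _, hp, hp.apply_zero.symm.trans hp0, fun z hz => ?_, fun z hz => ?_⟩
  · rcases eq_or_ne z 0 with rfl | hz0
    · simp [hp0]
    · exact (hpq z hz0 ▸ hre z hz hz0).le
  · rw [hgG, hgH, mul_assoc, mul_div_cancel₀ _ (hGne z hz)]

theorem natCast_mul_coeff_eq_sum_of_eq_mul {p : ℂ → ℂ} {c : ℕ → ℂ}
    (hg : HasPowerSeriesOnUnitDisc g b)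
    (hg₁ : HasPowerSeriesOnUnitDisc g₁ fun k => k * b k) (hp : HasPowerSeriesOnUnitDisc p c)
    (hmul : ∀ z ∈ ball (0 : ℂ) 1, g₁ z = g z * p z) (k : ℕ) :
    k * b k = ∑ i ∈ Finset.range (k + 1), b i * c (k - i) := by
  have hg₁' : HasPowerSeriesOnUnitDisc (g * p) fun k => k * b k :=
    fun z hz => by rw [Pi.mul_apply, ← hmul z hz]; exact hg₁ z hz
  exact congrFun (hg₁'.unique (hg.mul hp)) k

theorem norm_coeff_le_of_starlike (hg : HasPowerSeriesOnUnitDisc g b)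
    (hg₁ : HasPowerSeriesOnUnitDisc g₁ fun k => k * b k) (hb0 : b 0 = 0) (hb1 : b 1 = 1)
    (hne : ∀ z ∈ ball (0 : ℂ) 1, z ≠ 0 → g z ≠ 0)
    (hre : ∀ z ∈ ball (0 : ℂ) 1, z ≠ 0 → 0 < (g₁ z / g z).re) (k : ℕ) :
    ‖b k‖ ≤ k := by
  obtain ⟨p, c, hp, hc0, hpre, hmul⟩ := exists_re_nonneg_of_starlike hg hg₁ hb0 hb1 hne hre
  refine norm_le_of_natCast_mul_eq_sum hb1 hc0 (fun m hm => ?_)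
    (natCast_mul_coeff_eq_sum_of_eq_mul hg hg₁ hp hmul) k
  simpa [hc0] using hp.norm_coeff_le_of_re_nonneg hpre hm

end Starlike

theorem salagean_coeff_bound_general
    (n : ℕ) (Dn Dn1 : ℂ → ℂ) (a : ℕ → ℂ)
    (ha0 : a 0 = 0) (ha1 : a 1 = 1)
    (hDn : ∀ z ∈ Metric.ball (0 : ℂ) 1,
      HasSum (fun k : ℕ => (k : ℂ) ^ n * a k * z ^ k) (Dn z))
    (hDn1 : ∀ z ∈ Metric.ball (0 : ℂ) 1,
      HasSum (fun k : ℕ => (k : ℂ) ^ (n + 1) * a k * z ^ k) (Dn1 z))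
    (hne : ∀ z ∈ Metric.ball (0 : ℂ) 1, z ≠ 0 → Dn z ≠ 0)
    (hre : ∀ z ∈ Metric.ball (0 : ℂ) 1, z ≠ 0 → 0 < (Dn1 z / Dn z).re)
    (k : ℕ) (hk : 2 ≤ k) :
    ‖a k‖ ≤ (k : ℝ) ^ ((1 : ℤ) - (n : ℤ)) := by
  have hDn1' : HasPowerSeriesOnUnitDisc Dn1 fun k => k * ((k : ℂ) ^ n * a k) :=
    fun z hz => (hDn1 z hz).congr_fun fun k => by ring
  have hbound := norm_coeff_le_of_starlike hDn hDn1' (by simp [ha0]) (by simp [ha1]) hne hre k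
  have hkpos : (0 : ℝ) < k := by exact_mod_cast (by omega : 0 < k)
  rw [norm_mul, norm_pow, Complex.norm_natCast] at hbound
  rw [zpow_sub₀ hkpos.ne', zpow_one, zpow_natCast, le_div_iff₀ (pow_pos hkpos n), mul_comm]
  exact hbound

/-- Corollary 3.3: If f ∈ Sₙ then |aₖ| ≤ k^{1−n} for every integer k ≥ 2. -/
theorem salagean_coeff_bound
    (n : ℕ) (f Dn Dn1 : ℂ → ℂ) (a : ℕ → ℂ)
    (ha0 : a 0 = 0) (ha1 : a 1 = 1)
    (hf : ∀ z ∈ Metric.ball (0 : ℂ) 1, HasSum (fun k => a k * z ^ k) (f z))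
    (hDn : ∀ z ∈ Metric.ball (0 : ℂ) 1,
      HasSum (fun k : ℕ => (k : ℂ) ^ n * a k * z ^ k) (Dn z))
    (hDn1 : ∀ z ∈ Metric.ball (0 : ℂ) 1,
      HasSum (fun k : ℕ => (k : ℂ) ^ (n + 1) * a k * z ^ k) (Dn1 z))
    (hne : ∀ z ∈ Metric.ball (0 : ℂ) 1, z ≠ 0 → Dn z ≠ 0)
    (hre : ∀ z ∈ Metric.ball (0 : ℂ) 1, z ≠ 0 → 0 < (Dn1 z / Dn z).re)
    (k : ℕ) (hk : 2 ≤ k) :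
    ‖a k‖ ≤ (k : ℝ) ^ ((1 : ℤ) - (n : ℤ)) :=
  salagean_coeff_bound_general n Dn Dn1 a ha0 ha1 hDn hDn1 hne hre k hk
end
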